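/- arXiv:2306.02649 — 4 statements merged into one kernel-verified Lean document; each statement's English description precedes it below -/
import Mathlib

section
/- Circle inversion with respect to a circle centered at m maps a circle passing through m (with the point m removed) onto a line not passing through m. -/
/-!
Inversion is an involution, so the image of the punctured circle through the center `m` is its
preimage. By the power-of-a-point relation `dist x' y' = R² dist x y / (dist x m * dist y m)` for
images of points under inversion, `x'` is equidistant from `m` and from the image of the circle's
center exactly when `x` lies on the circle. Hence the image is the perpendicular bisector of `m`
and the inverse of the circle's center: a line, which does not contain `m`.
-/

noncomputable def circleInversion (m : EuclideanSpace ℝ (Fin 2)) (r : ℝ)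
    (p : EuclideanSpace ℝ (Fin 2)) : EuclideanSpace ℝ (Fin 2) :=
  m + (r ^ 2 / dist p m ^ 2) • (p - m)

open EuclideanGeometry AffineSubspace Module

theorem circleInversion_eq_inversion (m : EuclideanSpace ℝ (Fin 2)) (r : ℝ) :
    circleInversion m r = inversion m r := by
  ext1 p
  rw [circleInversion, inversion, div_pow, add_comm]
  rfl

section PerpBisector

variable {V P : Type*} [NormedAddCommGroup V] [InnerProductSpace ℝ V] [MetricSpace P]
  [NormedAddTorsor V P]

theorem finrank_direction_perpBisector {n : ℕ} (hV : finrank ℝ V = n + 1) {p₁ p₂ : P}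
    (h : p₁ ≠ p₂) : finrank ℝ (perpBisector p₁ p₂).direction = n := by
  have : Fact (finrank ℝ V = n + 1) := ⟨hV⟩
  rw [direction_perpBisector]
  exact Submodule.finrank_orthogonal_span_singleton (vsub_ne_zero.mpr h.symm)

theorem image_inversion_sphere_dist_center_diff_center {c y : P} {R : ℝ} (hR : R ≠ 0)
    (hy : y ≠ c) :
    inversion c R '' (Metric.sphere y (dist y c) \ {c}) =
      perpBisector c (inversion c R y) := by
  rw [Set.image_eq_preimage_of_inverse (inversion_involutive _ hR) (inversion_involutive _ hR),
    ← preimage_inversion_perpBisector_inversion hR hy, ← Set.preimage_comp,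
    (inversion_involutive c hR).comp_self, Set.preimage_id]

end PerpBisector

/-- Circle inversion with center `m` maps a circle passing through `m` (with the point `m`
removed) onto a line not passing through `m`. -/
theorem circleInversion_image_circle_through_center (m : EuclideanSpace ℝ (Fin 2)) (r : ℝ)
    (hr : 0 < r) (m' : EuclideanSpace ℝ (Fin 2)) (ρ : ℝ) (hρ : 0 < ρ)
    (hm : dist m m' = ρ) :
    ∃ L : AffineSubspace ℝ (EuclideanSpace ℝ (Fin 2)),
      Module.finrank ℝ L.direction = 1 ∧ m ∉ L ∧
      circleInversion m r '' ({p | dist p m' = ρ} \ {m}) = (L : Set (EuclideanSpace ℝ (Fin 2))) := by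
  have hr0 : r ≠ 0 := hr.ne'
  have hm' : m' ≠ m := fun h => hρ.ne' (by rw [← hm, h, dist_self])
  have hm_ne_inv : m ≠ inversion m r m' := fun h => hm' ((center_eq_inversion hr0).mp h)
  have hcircle : {p | dist p m' = ρ} = Metric.sphere m' (dist m' m) := by
    rw [dist_comm, hm]
    rfl
  refine ⟨perpBisector m (inversion m r m'), ?_, ?_, ?_⟩
  · exact finrank_direction_perpBisector (finrank_euclideanSpace_fin (n := 2)) hm_ne_inv
  · exact fun h => hm_ne_inv (left_mem_perpBisector.mp h)
  · rw [hcircle, circleInversion_eq_inversion,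
      image_inversion_sphere_dist_center_diff_center hr0 hm']
end

section
/- Let a be a circular arc with endpoints u and v on its underlying circle c. For any angle φ with 0 ≤ φ < π/2, there is exactly one circular arc from u to v (on the same side) making the same angle φ with c at both u and v; in particular, given the positions of u and v on a circle c and equal crossing angles with c at both endpoints, the arc connecting them is uniquely determined. -/
/-!
A circular arc leaving `u` with unit tangent `t` has its centre on the normal line `u + s i t`,
and passing through `v` forces `s · Im ((v - u) conj t) = |v - u|² / 2`. So the signed radius `s`,
hence the arc, is determined by `t` alone, and the arc degenerates to the chord exactly when `t`
is parallel to `v - u`. Conversely, unless `t` points straight away from `v`, this recipe does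
produce an arc, and its tangent at `v` is forced: on every circle through `u` and `v` the product
of the unit tangents at `u` and `v` is the square of the chord direction. The tangents prescribed
by the crossing angle `φ` have exactly this product, since the rotations by `φ` and `-φ` cancel,
and for `0 ≤ φ ≤ π` the one at `u` does not point straight away from `v`.
-/

open Complex

/-- The point of the circle with center `γ`, orientation `ε` (`1` = counterclockwise,
`-1` = clockwise) reached after sweeping an angle `t` starting from the point `a`. -/
noncomputable def arcPoint (γ : ℂ) (ε : ℝ) (a : ℂ) (t : ℝ) : ℂ :=
  γ + Complex.exp (((ε * t : ℝ) : ℂ) * Complex.I) * (a - γ)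

/-- `A` is a circular arc or line segment from `u` to `v` with unit tangent direction
`tu` at `u` (pointing along the arc) and unit tangent direction `tv` at `v`
(the direction of travel arriving at `v`). -/
def IsArcFromTo (A : Set ℂ) (u v tu tv : ℂ) : Prop :=
  (A = segment ℝ u v ∧ tu = (v - u) / ‖v - u‖ ∧ tv = (v - u) / ‖v - u‖) ∨
  (∃ (γ : ℂ) (ε Δ : ℝ), (ε = 1 ∨ ε = -1) ∧ 0 < Δ ∧ Δ < 2 * Real.pi ∧ u ≠ γ ∧
    arcPoint γ ε u Δ = v ∧ A = arcPoint γ ε u '' Set.Icc 0 Δ ∧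
    tu = (ε : ℂ) * Complex.I * (u - γ) / ‖u - γ‖ ∧
    tv = (ε : ℂ) * Complex.I * (v - γ) / ‖v - γ‖)

open ComplexConjugate
open scoped Real

lemma sub_ne_zero_of_norm_sub_eq_norm_sub {u v γ : ℂ} (h : ‖v - γ‖ = ‖u - γ‖) (huv : u ≠ v) :
    u - γ ≠ 0 := by
  intro hu
  rw [hu, norm_zero, norm_eq_zero, ← hu, sub_left_inj] at h
  exact huv h.symm

lemma norm_sub_eq_norm_sub_iff_re {u v γ : ℂ} :
    ‖v - γ‖ = ‖u - γ‖ ↔ ((v - u) * conj (u - γ)).re = -normSq (v - u) / 2 := by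
  have h : normSq (v - γ) = normSq (v - u) + normSq (u - γ) + 2 * ((v - u) * conj (u - γ)).re := by
    rw [← normSq_add, sub_add_sub_cancel]
  rw [← sq_eq_sq₀ (norm_nonneg _) (norm_nonneg _), ← normSq_eq_norm_sq, ← normSq_eq_norm_sq, h]
  constructor <;> intro h' <;> linarith

lemma norm_sub_eq_norm_sub_iff_im {u v t : ℂ} (s : ℝ) :
    ‖v - (u + s * I * t)‖ = ‖u - (u + s * I * t)‖ ↔
      s * ((v - u) * conj t).im = normSq (v - u) / 2 := by
  have h : (v - u) * conj (u - (u + s * I * t)) = s * (I * ((v - u) * conj t)) := by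
    simp only [sub_add_cancel_left, map_neg, map_mul, conj_ofReal, conj_I]
    ring
  rw [norm_sub_eq_norm_sub_iff_re, h, re_ofReal_mul, I_mul_re]
  constructor <;> intro h' <;> linarith

lemma tangent_mul_tangent_eq_chord_sq {u v γ ζ : ℂ} (hζ : ζ ^ 2 = -1) (h : ‖v - γ‖ = ‖u - γ‖)
    (huv : u ≠ v) :
    ζ * (u - γ) / ‖u - γ‖ * (ζ * (v - γ) / ‖v - γ‖) = ((v - u) / ‖v - u‖) ^ 2 := by
  have hr : (‖u - γ‖ : ℂ) ≠ 0 :=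
    ofReal_ne_zero.2 (norm_ne_zero_iff.2 (sub_ne_zero_of_norm_sub_eq_norm_sub h huv))
  have hd : (‖v - u‖ : ℂ) ≠ 0 := by simpa [sub_eq_zero] using huv.symm
  have hu := mul_conj' (u - γ)
  have hv := mul_conj' (v - γ)
  have hvu := mul_conj' (v - u)
  rw [h] at hv ⊢
  rw [div_pow, div_mul_div_comm, div_eq_div_iff (mul_ne_zero hr hr) (pow_ne_zero 2 hd), ← hvu,
    show v - u = (v - γ) - (u - γ) by ring, map_sub]
  generalize (‖u - γ‖ : ℂ) = r at hu hv ⊢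
  generalize u - γ = a at hu ⊢
  generalize v - γ = b at hv ⊢
  linear_combination a * b * (b - a) * (conj b - conj a) * hζ - (b - a) * a * hv + (b - a) * b * hu

lemma norm_arcPoint_sub_center (γ u : ℂ) (ε t : ℝ) : ‖arcPoint γ ε u t - γ‖ = ‖u - γ‖ := by
  rw [arcPoint, add_sub_cancel_left, norm_mul, norm_exp_ofReal_mul_I, one_mul]

lemma eq_of_exp_mul_I_eq {x y : ℝ} (hxy : |x - y| < 2 * π) (h : exp (x * I) = exp (y * I)) :
    x = y :=
  eq_of_circleMap_eq (c := 0) one_ne_zero hxy (by simp [circleMap, h])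

lemma arcPoint_injOn {γ u : ℂ} {ε : ℝ} (hε : ε = 1 ∨ ε = -1) (hu : u ≠ γ) :
    Set.InjOn (arcPoint γ ε u) (Set.Ico 0 (2 * π)) := by
  intro x hx y hy h
  have hexp : exp ((ε * x : ℝ) * I) = exp ((ε * y : ℝ) * I) :=
    mul_right_cancel₀ (sub_ne_zero.2 hu) (add_left_cancel h)
  have hε1 : |ε| = 1 := by rcases hε with rfl | rfl <;> simp
  refine mul_left_cancel₀ (abs_ne_zero.1 (hε1.trans_ne one_ne_zero)) (eq_of_exp_mul_I_eq ?_ hexp)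
  rw [← mul_sub, abs_mul, hε1, one_mul, abs_sub_lt_iff]
  constructor <;> linarith [hx.1, hx.2, hy.1, hy.2]

lemma exists_exp_mul_I_eq {q : ℂ} (hq : ‖q‖ = 1) (hq1 : q ≠ 1) :
    ∃ Δ ∈ Set.Ioo 0 (2 * π), exp (Δ * I) = q := by
  have harg : exp (arg (-q) * I) = -q := by
    simpa [hq] using norm_mul_exp_arg_mul_I (-q)
  have hne : arg (-q) ≠ π := by
    intro h
    rw [h, exp_pi_mul_I, neg_inj] at harg
    exact hq1 harg.symm
  refine ⟨arg (-q) + π, ⟨by linarith [neg_pi_lt_arg (-q)], ?_⟩, ?_⟩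
  · linarith [lt_of_le_of_ne (arg_le_pi (-q)) hne]
  · rw [ofReal_add, add_mul, Complex.exp_add, harg, exp_pi_mul_I, neg_mul_neg, mul_one]

lemma exists_arcPoint_eq {γ u v : ℂ} {ε : ℝ} (hε : ε = 1 ∨ ε = -1) (huv : u ≠ v)
    (h : ‖v - γ‖ = ‖u - γ‖) : ∃ Δ ∈ Set.Ioo 0 (2 * π), arcPoint γ ε u Δ = v := by
  have hu := sub_ne_zero_of_norm_sub_eq_norm_sub h huv
  set q := (v - γ) / (u - γ)
  have hq : ‖q‖ = 1 := by rw [norm_div, h, div_self (norm_ne_zero_iff.2 hu)]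
  have hq1 : q ≠ 1 := by
    rw [Ne, div_eq_one_iff_eq hu, sub_left_inj]
    exact huv.symm
  suffices ∃ Δ ∈ Set.Ioo 0 (2 * π), exp ((ε * Δ : ℝ) * I) = q by
    obtain ⟨Δ, hΔ, hexp⟩ := this
    refine ⟨Δ, hΔ, ?_⟩
    rw [arcPoint, hexp, div_mul_cancel₀ _ hu, add_sub_cancel]
  rcases hε with rfl | rfl
  · simpa using exists_exp_mul_I_eq hq hq1
  · obtain ⟨Δ, hΔ, hexp⟩ := exists_exp_mul_I_eq (q := conj q) (by rwa [norm_conj])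
      (by rwa [Ne, map_eq_one_iff _ (star_injective)])
    refine ⟨Δ, hΔ, ?_⟩
    rw [← conj_conj q, ← hexp, ← exp_conj]
    simp

lemma arc_center_eq {γ u : ℂ} {ε : ℝ} (hε : ε = 1 ∨ ε = -1) (hu : u ≠ γ) :
    γ = u + (ε * ‖u - γ‖ : ℝ) * I * (ε * I * (u - γ) / ‖u - γ‖) := by
  have hr : (‖u - γ‖ : ℂ) ≠ 0 := by simpa [sub_eq_zero] using hu
  have hε2 : (ε : ℂ) ^ 2 = 1 := by rcases hε with rfl | rfl <;> norm_num
  push_cast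
  field_simp
  linear_combination (u - γ) * hε2 - ε ^ 2 * (u - γ) * I_sq

lemma arc_signed_radius_mul_im {γ u v : ℂ} {ε Δ : ℝ} (hε : ε = 1 ∨ ε = -1) (hu : u ≠ γ)
    (hv : arcPoint γ ε u Δ = v) :
    (ε * ‖u - γ‖) * ((v - u) * conj (ε * I * (u - γ) / ‖u - γ‖)).im = normSq (v - u) / 2 :=
  (norm_sub_eq_norm_sub_iff_im _).1 <| by
    rw [← arc_center_eq hε hu, ← hv, norm_arcPoint_sub_center]

lemma arc_tangent_ne_chord {γ u v : ℂ} {ε Δ : ℝ} (hε : ε = 1 ∨ ε = -1) (hu : u ≠ γ)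
    (hv : arcPoint γ ε u Δ = v) (huv : u ≠ v) :
    ε * I * (u - γ) / ‖u - γ‖ ≠ (v - u) / ‖v - u‖ := by
  intro h
  have hs := arc_signed_radius_mul_im hε hu hv
  have him : ((v - u) * conj ((v - u) / ‖v - u‖)).im = 0 := by
    rw [map_div₀, conj_ofReal, mul_div_assoc', mul_conj, ← ofReal_div, ofReal_im]
  rw [h, him, mul_zero, eq_comm, div_eq_zero_iff, normSq_eq_zero, sub_eq_zero] at hs
  exact huv (hs.resolve_right two_ne_zero).symm

lemma arc_eq_of_tangent_eq {γ γ' u v : ℂ} {ε ε' Δ Δ' : ℝ} (huv : u ≠ v)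
    (hε : ε = 1 ∨ ε = -1) (hε' : ε' = 1 ∨ ε' = -1) (hu : u ≠ γ) (hu' : u ≠ γ')
    (hΔ : Δ ∈ Set.Ioo 0 (2 * π)) (hΔ' : Δ' ∈ Set.Ioo 0 (2 * π))
    (hv : arcPoint γ ε u Δ = v) (hv' : arcPoint γ' ε' u Δ' = v)
    (ht : ε * I * (u - γ) / ‖u - γ‖ = ε' * I * (u - γ') / ‖u - γ'‖) :
    arcPoint γ ε u '' Set.Icc 0 Δ = arcPoint γ' ε' u '' Set.Icc 0 Δ' := by
  have hs := arc_signed_radius_mul_im hε hu hv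
  have hs' := arc_signed_radius_mul_im hε' hu' hv'
  rw [← ht] at hs'
  have hN : normSq (v - u) / 2 ≠ 0 := by
    simpa [sub_eq_zero] using huv.symm
  have hss : ε * ‖u - γ‖ = ε' * ‖u - γ'‖ :=
    mul_right_cancel₀ (right_ne_zero_of_mul (hs ▸ hN)) (hs.trans hs'.symm)
  have hγ : γ = γ' := calc
    γ = u + (ε * ‖u - γ‖ : ℝ) * I * (ε * I * (u - γ) / ‖u - γ‖) := arc_center_eq hε hu
    _ = u + (ε' * ‖u - γ'‖ : ℝ) * I * (ε' * I * (u - γ') / ‖u - γ'‖) := by rw [hss, ht]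
    _ = γ' := (arc_center_eq hε' hu').symm
  subst hγ
  obtain rfl : ε = ε' := mul_right_cancel₀ (norm_ne_zero_iff.2 (sub_ne_zero.2 hu)) hss
  obtain rfl : Δ = Δ' := arcPoint_injOn hε hu (Set.Ioo_subset_Ico_self hΔ)
    (Set.Ioo_subset_Ico_self hΔ') (hv.trans hv'.symm)
  rfl

lemma IsArcFromTo.eq {A B : Set ℂ} {u v t t₁ t₂ : ℂ} (hA : IsArcFromTo A u v t t₁)
    (hB : IsArcFromTo B u v t t₂) (huv : u ≠ v) : A = B := by
  rcases hA with ⟨rfl, hAt, -⟩ | ⟨γ, ε, Δ, hε, hΔ0, hΔ1, hu, hv, rfl, hAt, -⟩ <;>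
    rcases hB with ⟨rfl, hBt, -⟩ | ⟨γ', ε', Δ', hε', hΔ0', hΔ1', hu', hv', rfl, hBt, -⟩
  · rfl
  · exact absurd (hBt.symm.trans hAt) (arc_tangent_ne_chord hε' hu' hv' huv)
  · exact absurd (hAt.symm.trans hBt) (arc_tangent_ne_chord hε hu hv huv)
  · exact arc_eq_of_tangent_eq huv hε hε' hu hu' ⟨hΔ0, hΔ1⟩ ⟨hΔ0', hΔ1'⟩ hv hv'
      (hAt.symm.trans hBt)

lemma eq_or_eq_neg_of_im_mul_conj_eq_zero {w t : ℂ} (hw : ‖w‖ = 1) (ht : ‖t‖ = 1)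
    (h : (w * conj t).im = 0) : t = w ∨ t = -w := by
  have hz : w * conj t = (w * conj t).re := Complex.ext (by simp) (by simp [h])
  have hwt : w = w * conj t * t := by
    rw [mul_assoc, mul_comm (conj t), mul_conj', ht, ofReal_one, one_pow, mul_one]
  have hre : |(w * conj t).re| = 1 := by
    rw [abs_re_eq_norm.2 h, norm_mul, norm_conj, hw, ht, one_mul]
  rcases (abs_eq zero_le_one).1 hre with h1 | h1
  · left
    rw [hwt, hz, h1, ofReal_one, one_mul]
  · right
    rw [hwt, hz, h1, ofReal_neg, ofReal_one, neg_one_mul, neg_neg]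

lemma isArcFromTo_segment_of_im_mul_conj_eq_zero {u v t t' : ℂ} (huv : u ≠ v) (ht : ‖t‖ = 1)
    (hne : t ≠ -((v - u) / ‖v - u‖)) (htt' : t * t' = ((v - u) / ‖v - u‖) ^ 2)
    (hc : ((v - u) * conj t).im = 0) : IsArcFromTo (segment ℝ u v) u v t t' := by
  have hd : ‖v - u‖ ≠ 0 := by simpa [sub_eq_zero] using huv.symm
  have hw : ‖(v - u) / ‖v - u‖‖ = 1 := by
    rw [norm_div, norm_real, Real.norm_of_nonneg (norm_nonneg _), div_self hd]
  have hwt : ((v - u) / ‖v - u‖ * conj t).im = 0 := by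
    rw [div_mul_eq_mul_div, div_ofReal_im, hc, zero_div]
  have htw := (eq_or_eq_neg_of_im_mul_conj_eq_zero hw ht hwt).resolve_right hne
  refine Or.inl ⟨rfl, htw, mul_left_cancel₀ (norm_ne_zero_iff.1 (ht.trans_ne one_ne_zero)) ?_⟩
  rw [htt', sq, htw]

lemma exists_isArcFromTo_of_im_mul_conj_ne_zero {u v t t' : ℂ} (huv : u ≠ v) (ht : ‖t‖ = 1)
    (htt' : t * t' = ((v - u) / ‖v - u‖) ^ 2) (hc : ((v - u) * conj t).im ≠ 0) :
    ∃ A, IsArcFromTo A u v t t' := by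
  set s : ℝ := normSq (v - u) / (2 * ((v - u) * conj t).im)
  have hsc : s * ((v - u) * conj t).im = normSq (v - u) / 2 := by
    simp only [s]
    field_simp
  have hs0 : s ≠ 0 := by
    rintro h
    rw [h, zero_mul, eq_comm, div_eq_zero_iff, normSq_eq_zero, sub_eq_zero] at hsc
    exact huv (hsc.resolve_right two_ne_zero).symm
  set γ := u + s * I * t
  have hγ : ‖v - γ‖ = ‖u - γ‖ := (norm_sub_eq_norm_sub_iff_im s).2 hsc
  have hnorm : ‖u - γ‖ = |s| := by
    simp [γ, ht]
  have hu : u ≠ γ := by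
    intro h
    rw [h, sub_self, norm_zero, eq_comm, abs_eq_zero] at hnorm
    exact hs0 hnorm
  obtain ⟨ε, hε, hεs⟩ : ∃ ε : ℝ, (ε = 1 ∨ ε = -1) ∧ ε * s = |s| := by
    rcases hs0.lt_or_gt with h | h
    · exact ⟨-1, Or.inr rfl, by rw [abs_of_neg h]; ring⟩
    · exact ⟨1, Or.inl rfl, by rw [abs_of_pos h]; ring⟩
  obtain ⟨Δ, ⟨hΔ0, hΔ1⟩, hv⟩ := exists_arcPoint_eq hε huv hγ
  have htu : t = ε * I * (u - γ) / ‖u - γ‖ := by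
    have hε0 : (ε : ℂ) ≠ 0 := by rcases hε with rfl | rfl <;> norm_num
    have hs0' : (s : ℂ) ≠ 0 := ofReal_ne_zero.2 hs0
    rw [hnorm, ← hεs, show u - γ = -(s * I * t) by simp [γ]]
    push_cast
    rw [show (ε : ℂ) * I * -(s * I * t) = ε * s * t by linear_combination (-(ε : ℂ) * s * t) * I_sq,
      mul_div_cancel_left₀ _ (mul_ne_zero hε0 hs0')]
  have hζ : ((ε : ℂ) * I) ^ 2 = -1 := by
    rcases hε with rfl | rfl <;> simp
  refine ⟨_, Or.inr ⟨γ, ε, Δ, hε, hΔ0, hΔ1, hu, hv, rfl, htu,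
    mul_left_cancel₀ (norm_ne_zero_iff.1 (ht.trans_ne one_ne_zero)) ?_⟩⟩
  rw [htt', ← tangent_mul_tangent_eq_chord_sq hζ hγ huv, ← htu]

lemma exists_isArcFromTo {u v t t' : ℂ} (huv : u ≠ v) (ht : ‖t‖ = 1)
    (hne : t ≠ -((v - u) / ‖v - u‖)) (htt' : t * t' = ((v - u) / ‖v - u‖) ^ 2) :
    ∃ A, IsArcFromTo A u v t t' := by
  by_cases hc : ((v - u) * conj t).im = 0
  · exact ⟨_, isArcFromTo_segment_of_im_mul_conj_eq_zero huv ht hne htt' hc⟩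
  · exact exists_isArcFromTo_of_im_mul_conj_ne_zero huv ht htt' hc

lemma exp_mul_I_mul_tangent_ne_neg_chord {u v m : ℂ} (h : ‖v - m‖ = ‖u - m‖) (huv : u ≠ v)
    {φ : ℝ} (hφ0 : 0 ≤ φ) (hφπ : φ ≤ π) :
    exp (φ * I) * (I * (u - m) / ‖u - m‖) ≠ -((v - u) / ‖v - u‖) := by
  intro heq
  have hd : 0 < ‖v - u‖ := norm_pos_iff.2 (sub_ne_zero.2 huv.symm)
  have hr : 0 < ‖u - m‖ := norm_pos_iff.2 (sub_ne_zero_of_norm_sub_eq_norm_sub h huv)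
  have key : exp (φ * I) * ‖u - m‖ = I * ((v - u) * conj (u - m)) / ‖v - u‖ := by
    have hum := mul_conj' (u - m)
    have hr' : (‖u - m‖ : ℂ) ≠ 0 := ofReal_ne_zero.2 hr.ne'
    calc exp (φ * I) * ‖u - m‖
        = exp (φ * I) * (I * (u - m) / ‖u - m‖) * (-I * conj (u - m)) := by
          field_simp
          linear_combination I ^ 2 * hum + (‖u - m‖ : ℂ) ^ 2 * I_sq
      _ = I * ((v - u) * conj (u - m)) / ‖v - u‖ := by
          rw [heq]
          ring
  have him := congrArg im key
  rw [im_mul_ofReal, exp_ofReal_mul_I_im, div_ofReal_im, I_mul_im,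
    norm_sub_eq_norm_sub_iff_re.1 h] at him
  have hN : 0 < normSq (v - u) := normSq_pos.2 (sub_ne_zero.2 huv.symm)
  linarith [mul_nonneg (Real.sin_nonneg_of_nonneg_of_le_pi hφ0 hφπ) hr.le,
    div_neg_of_neg_of_pos (by linarith : -normSq (v - u) / 2 < 0) hd]

theorem existsUnique_arc_with_crossing_angle_general (m : ℂ) (ρ : ℝ) (u v : ℂ)
    (hu : dist u m = ρ) (hv : dist v m = ρ) (huv : u ≠ v) (φ : ℝ) (hφ0 : 0 ≤ φ)
    (hφ1 : φ < Real.pi / 2) :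
    ∃! A : Set ℂ,
      IsArcFromTo A u v
        (Complex.exp ((φ : ℂ) * Complex.I) * (Complex.I * (u - m) / (ρ : ℂ)))
        (Complex.exp (-(φ : ℂ) * Complex.I) * (Complex.I * (v - m) / (ρ : ℂ))) := by
  rw [Complex.dist_eq] at hu hv
  subst hu
  have hunit : ‖exp (φ * I) * (I * (u - m) / ‖u - m‖)‖ = 1 := by
    simp [norm_exp_ofReal_mul_I, sub_ne_zero_of_norm_sub_eq_norm_sub hv huv]
  have hchord := tangent_mul_tangent_eq_chord_sq I_sq hv huv
  rw [hv] at hchord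
  obtain ⟨A, hA⟩ := exists_isArcFromTo huv hunit
    (exp_mul_I_mul_tangent_ne_neg_chord hv huv hφ0 (by linarith [Real.pi_pos]))
    (by rw [← hchord, mul_mul_mul_comm, ← Complex.exp_add, ← add_mul, add_neg_cancel, zero_mul,
      Complex.exp_zero, one_mul])
  exact ⟨A, hA, fun B hB => hB.eq hA huv⟩

/-- Property 1 of Duncan et al.: given two distinct points `u, v` on a circle `c`
(center `m`, radius `ρ`) and an angle `0 ≤ φ < π/2`, there is exactly one circular arc
(or line segment) from `u` to `v` on the same side that makes the crossing angle `φ`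
with `c` at both of its endpoints.  The (signed) crossing angle with `c` is expressed
via the tangent directions: at `u` the tangent of the arc is the counterclockwise
tangent `i(u - m)/ρ` of `c` rotated by `φ`, and at `v` it is the counterclockwise
tangent of `c` rotated by `-φ`. -/
theorem existsUnique_arc_with_crossing_angle (m : ℂ) (ρ : ℝ) (hρ : 0 < ρ) (u v : ℂ)
    (hu : dist u m = ρ) (hv : dist v m = ρ) (huv : u ≠ v) (φ : ℝ) (hφ0 : 0 ≤ φ)
    (hφ1 : φ < Real.pi / 2) :
    ∃! A : Set ℂ,
      IsArcFromTo A u v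
        (Complex.exp ((φ : ℂ) * Complex.I) * (Complex.I * (u - m) / (ρ : ℂ)))
        (Complex.exp (-(φ : ℂ) * Complex.I) * (Complex.I * (v - m) / (ρ : ℂ))) :=
  existsUnique_arc_with_crossing_angle_general m ρ u v hu hv huv φ hφ0 hφ1
end

section
/- Let a₁ and a₂ be two circular arcs with underlying circles c₁, c₂ of radii r₁ ≥ r₂, having a unique proper (transversal) intersection point p. Then there exists r₀ > 0 such that for every radius 0 < r < r₀ there is a circle of radius r orthogonal to both c₁ and c₂ whose interior contains p. -/
/-!
The condition on the centre `m` says that `m` has power `r ^ 2` with respect to both circles,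
i.e. `m` lies on their radical axis: the perpendicular to the line of centres through `p`.
Since the circles cross, `p` is not on the line of centres; let `f` be its foot on that line and
`h = dist p f > 0`. The point `m` on the ray from `f` through `p` with `dist m f ^ 2 = h ^ 2 + r ^ 2`
has power `r ^ 2` with respect to every circle centred on the line and passing through `p`, and
`dist p m = √(h ^ 2 + r ^ 2) - h < r`. So every `r > 0` works.
-/

open EuclideanGeometry

theorem notMem_affineSpan_pair_of_abs_sub_lt_of_lt_add {V P : Type*} [NormedAddCommGroup V]
    [NormedSpace ℝ V] [MetricSpace P] [NormedAddTorsor V P] {p p₁ p₂ : P}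
    (h₁ : |dist p p₁ - dist p p₂| < dist p₁ p₂) (h₂ : dist p₁ p₂ < dist p p₁ + dist p p₂) :
    p ∉ line[ℝ, p₁, p₂] := by
  intro hp
  rw [abs_sub_lt_iff] at h₁
  have := dist_comm p p₁
  have := dist_comm p p₂
  have := dist_comm p₁ p₂
  rcases (collinear_insert_of_mem_affineSpan_pair hp).wbtw_or_wbtw_or_wbtw with h | h | h <;>
    linarith [h.dist_add_dist]

section Projection

variable {V P : Type*} [NormedAddCommGroup V] [InnerProductSpace ℝ V] [MetricSpace P]
  [NormedAddTorsor V P] {s : AffineSubspace ℝ P} [Nonempty s] [s.direction.HasOrthogonalProjection]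

theorem dist_smul_vsub_orthogonalProjection_vadd_sq (p : P) {q : P} (hq : q ∈ s) (t : ℝ) :
    dist (t • (p -ᵥ orthogonalProjection s p) +ᵥ (orthogonalProjection s p : P)) q ^ 2 =
      dist p q ^ 2 + (t ^ 2 - 1) * dist p (orthogonalProjection s p) ^ 2 := by
  have hv := vsub_orthogonalProjection_mem_direction_orthogonal s p
  have hf := orthogonalProjection_mem (s := s) p
  have ht := dist_sq_smul_orthogonal_vadd_smul_orthogonal_vadd hf hq t 0 hv
  have h1 := dist_sq_smul_orthogonal_vadd_smul_orthogonal_vadd hf hq 1 0 hv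
  simp only [one_smul, vsub_vadd, zero_smul, zero_vadd, sub_zero, norm_one, Real.norm_eq_abs,
    abs_mul_abs_self, mul_one, one_mul, ← dist_eq_norm_vsub] at ht h1
  linear_combination ht - h1

theorem exists_forall_dist_sq_eq_dist_sq_add_sq_and_dist_lt {p : P} (hp : p ∉ s) {r : ℝ}
    (hr : 0 < r) : ∃ m : P, (∀ q ∈ s, dist m q ^ 2 = dist p q ^ 2 + r ^ 2) ∧ dist p m < r := by
  set f : P := (orthogonalProjection s p : P)
  set h := dist p f
  have hh : 0 < h := dist_pos.2 fun hpf ↦ hp (hpf ▸ orthogonalProjection_mem p)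
  set t := √(h ^ 2 + r ^ 2) / h
  have hth : t * h = √(h ^ 2 + r ^ 2) := div_mul_cancel₀ _ hh.ne'
  have hth_sq : (t * h) ^ 2 = h ^ 2 + r ^ 2 := by rw [hth, Real.sq_sqrt (by positivity)]
  have hsqrt : √(h ^ 2 + r ^ 2) < h + r := by
    rw [Real.sqrt_lt' (by positivity)]; nlinarith [mul_pos hh hr]
  have ht : 1 ≤ t := by
    rw [le_div_iff₀ hh, one_mul]; exact Real.le_sqrt_of_sq_le (by linarith [sq_nonneg r])
  refine ⟨t • (p -ᵥ f) +ᵥ f, fun q hq ↦ ?_, ?_⟩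
  · rw [dist_smul_vsub_orthogonalProjection_vadd_sq p hq]
    linear_combination hth_sq
  · calc dist p (t • (p -ᵥ f) +ᵥ f)
        = dist ((1 : ℝ) • (p -ᵥ f) +ᵥ f) (t • (p -ᵥ f) +ᵥ f) := by rw [one_smul, vsub_vadd]
      _ = (t - 1) * h := by
        rw [dist_vadd_cancel_right, dist_eq_norm, ← sub_smul, norm_smul, Real.norm_eq_abs,
          abs_sub_comm, abs_of_nonneg (sub_nonneg.2 ht), ← dist_eq_norm_vsub]
      _ < r := by linarith

end Projection

theorem exists_small_orthogonal_circle_around_intersection_general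
    (m₁ m₂ : EuclideanSpace ℝ (Fin 2)) (r₁ r₂ : ℝ) (h₁₂ : r₂ ≤ r₁)
    (hd₁ : r₁ - r₂ < dist m₁ m₂) (hd₂ : dist m₁ m₂ < r₁ + r₂)
    (p : EuclideanSpace ℝ (Fin 2)) (hp₁ : dist p m₁ = r₁) (hp₂ : dist p m₂ = r₂) :
    ∃ r₀ > 0, ∀ r : ℝ, 0 < r → r < r₀ →
      ∃ m : EuclideanSpace ℝ (Fin 2),
        dist m m₁ ^ 2 = r₁ ^ 2 + r ^ 2 ∧ dist m m₂ ^ 2 = r₂ ^ 2 + r ^ 2 ∧ dist p m < r := by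
  have hp : p ∉ line[ℝ, m₁, m₂] := by
    apply notMem_affineSpan_pair_of_abs_sub_lt_of_lt_add <;> rw [hp₁, hp₂]
    · rw [abs_sub_lt_iff]; constructor <;> linarith
    · exact hd₂
  refine ⟨1, one_pos, fun r hr _ ↦ ?_⟩
  obtain ⟨m, hm, hpm⟩ := exists_forall_dist_sq_eq_dist_sq_add_sq_and_dist_lt hp hr
  refine ⟨m, ?_, ?_, hpm⟩
  · rw [hm m₁ (left_mem_affineSpan_pair ℝ m₁ m₂), hp₁]
  · rw [hm m₂ (right_mem_affineSpan_pair ℝ m₁ m₂), hp₂]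

/-- Let two circles (centers `m₁, m₂`, radii `r₁ ≥ r₂ > 0`) cross transversally (i.e.
`r₁ - r₂ < dist m₁ m₂ < r₁ + r₂`), and let `p` be an intersection point of the two
circles (a proper intersection of two arcs on them). Then there is `r₀ > 0` such that for
every radius `0 < r < r₀` there is a circle of radius `r` orthogonal to both circles
whose interior contains `p`. -/
theorem exists_small_orthogonal_circle_around_intersection
    (m₁ m₂ : EuclideanSpace ℝ (Fin 2)) (r₁ r₂ : ℝ) (h₂ : 0 < r₂) (h₁₂ : r₂ ≤ r₁)
    (hd₁ : r₁ - r₂ < dist m₁ m₂) (hd₂ : dist m₁ m₂ < r₁ + r₂)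
    (p : EuclideanSpace ℝ (Fin 2)) (hp₁ : dist p m₁ = r₁) (hp₂ : dist p m₂ = r₂) :
    ∃ r₀ > 0, ∀ r : ℝ, 0 < r → r < r₀ →
      ∃ m : EuclideanSpace ℝ (Fin 2),
        dist m m₁ ^ 2 = r₁ ^ 2 + r ^ 2 ∧ dist m m₂ ^ 2 = r₂ ^ 2 + r ^ 2 ∧ dist p m < r :=
  exists_small_orthogonal_circle_around_intersection_general m₁ m₂ r₁ r₂ h₁₂ hd₁ hd₂ p hp₁ hp₂
end

section
/- Two distinct circles c₁ and c₂ both orthogonal to the unit circle intersect in at most one point inside the open unit disk D. -/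
/-!
Expanding `‖p - m‖² = ρ² = ‖m‖² - 1` shows that a point `p` lies on a circle orthogonal to the
unit circle exactly when `2⟪p, m⟫ = ‖p‖² + 1`. Subtracting this for two such circles gives
`⟪p, m₁ - m₂⟫ = 0`, so all common points lie on one line through the origin. On such a line,
`q = t • p` with both points on the circle forces `(t - 1)(t‖p‖² - 1) = 0`; the second factor
makes `q` the inverse `p / ‖p‖²` of `p` in the unit circle, which cannot also lie in the disk.
-/

open Module RealInnerProductSpace

section InnerProductSpace

variable {E : Type*} [NormedAddCommGroup E] [InnerProductSpace ℝ E]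

theorem two_inner_eq_norm_sq_add_one_of_dist_eq {p m : E} {ρ : ℝ} (hp : dist p m = ρ)
    (hm : ‖m‖ ^ 2 = 1 + ρ ^ 2) : 2 * ⟪p, m⟫ = ‖p‖ ^ 2 + 1 := by
  have := norm_sub_sq_real p m
  rw [← dist_eq_norm, hp] at this
  linarith

theorem eq_one_of_two_inner_smul_eq {p m : E} {t : ℝ} (hp : 2 * ⟪p, m⟫ = ‖p‖ ^ 2 + 1)
    (htp : 2 * ⟪t • p, m⟫ = ‖t • p‖ ^ 2 + 1) (hp₁ : ‖p‖ < 1) (htp₁ : ‖t • p‖ < 1) : t = 1 := by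
  have htp_sq : ‖t • p‖ ^ 2 = t ^ 2 * ‖p‖ ^ 2 := by
    rw [norm_smul, mul_pow, Real.norm_eq_abs, sq_abs]
  rw [real_inner_smul_left, htp_sq] at htp
  have hfactor : (t - 1) * (t * ‖p‖ ^ 2 - 1) = 0 := by
    linear_combination t * hp - htp
  rcases mul_eq_zero.mp hfactor with ht | hinv
  · linarith
  · -- `t • p` would be the inverse of `p`, so `‖p‖ * ‖t • p‖ = 1`
    have htp_lt : t ^ 2 * ‖p‖ ^ 2 < 1 := by nlinarith [norm_nonneg (t • p)]
    have hp_lt : ‖p‖ ^ 2 < 1 := by nlinarith [norm_nonneg p]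
    nlinarith [sq_nonneg t, sq_nonneg ‖p‖, mul_nonneg (sq_nonneg t) (sq_nonneg ‖p‖)]

theorem exists_smul_eq_of_inner_eq_zero_of_finrank_eq_two (hE : finrank ℝ E = 2) {v p q : E}
    (hv : v ≠ 0) (hp₀ : p ≠ 0) (hp : ⟪v, p⟫ = 0) (hq : ⟪v, q⟫ = 0) : ∃ t : ℝ, t • p = q := by
  have : Fact (finrank ℝ E = 1 + 1) := ⟨hE⟩
  let p' : (ℝ ∙ v)ᗮ := ⟨p, Submodule.mem_orthogonal_singleton_iff_inner_right.mpr hp⟩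
  let q' : (ℝ ∙ v)ᗮ := ⟨q, Submodule.mem_orthogonal_singleton_iff_inner_right.mpr hq⟩
  obtain ⟨t, ht⟩ := (finrank_eq_one_iff_of_nonzero' p' (by simpa [p'] using hp₀)).mp
    (Submodule.finrank_orthogonal_span_singleton hv) q'
  exact ⟨t, congrArg Subtype.val ht⟩

end InnerProductSpace

theorem orthogonal_circles_at_most_one_intersection_in_unit_disk_general
    (m₁ m₂ : EuclideanSpace ℝ (Fin 2)) (ρ₁ ρ₂ : ℝ)
    (ho₁ : ‖m₁‖ ^ 2 = 1 + ρ₁ ^ 2) (ho₂ : ‖m₂‖ ^ 2 = 1 + ρ₂ ^ 2)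
    (hne : {p : EuclideanSpace ℝ (Fin 2) | dist p m₁ = ρ₁} ≠ {p | dist p m₂ = ρ₂}) :
    ({p : EuclideanSpace ℝ (Fin 2) | dist p m₁ = ρ₁} ∩ {p | dist p m₂ = ρ₂} ∩
      {p | ‖p‖ < 1}).Subsingleton := by
  rintro p ⟨⟨hp₁, hp₂⟩, hp⟩ q ⟨⟨hq₁, hq₂⟩, hq⟩
  have hm : m₁ - m₂ ≠ 0 := by
    rintro hm
    obtain rfl : m₁ = m₂ := sub_eq_zero.mp hm
    obtain rfl : ρ₁ = ρ₂ := hp₁.symm.trans hp₂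
    exact hne rfl
  have hp₁' := two_inner_eq_norm_sq_add_one_of_dist_eq hp₁ ho₁
  have hp₂' := two_inner_eq_norm_sq_add_one_of_dist_eq hp₂ ho₂
  have hq₁' := two_inner_eq_norm_sq_add_one_of_dist_eq hq₁ ho₁
  have hq₂' := two_inner_eq_norm_sq_add_one_of_dist_eq hq₂ ho₂
  have hp₀ : p ≠ 0 := by
    rintro rfl
    simp at hp₁'
  have hpm : ⟪m₁ - m₂, p⟫ = 0 := by
    rw [real_inner_comm, inner_sub_right]; linarith
  have hqm : ⟪m₁ - m₂, q⟫ = 0 := by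
    rw [real_inner_comm, inner_sub_right]; linarith
  obtain ⟨t, rfl⟩ := exists_smul_eq_of_inner_eq_zero_of_finrank_eq_two finrank_euclideanSpace_fin
    hm hp₀ hpm hqm
  rw [eq_one_of_two_inner_smul_eq hp₁' hq₁' hp hq, one_smul]

/-- Two distinct circles both orthogonal to the unit circle (a circle with center `m` and
radius `ρ > 0` is orthogonal to the unit circle iff `‖m‖² = 1 + ρ²`) intersect in at most
one point inside the open unit disk. -/
theorem orthogonal_circles_at_most_one_intersection_in_unit_disk
    (m₁ m₂ : EuclideanSpace ℝ (Fin 2)) (ρ₁ ρ₂ : ℝ) (h₁ : 0 < ρ₁) (h₂ : 0 < ρ₂)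
    (ho₁ : ‖m₁‖ ^ 2 = 1 + ρ₁ ^ 2) (ho₂ : ‖m₂‖ ^ 2 = 1 + ρ₂ ^ 2)
    (hne : {p : EuclideanSpace ℝ (Fin 2) | dist p m₁ = ρ₁} ≠ {p | dist p m₂ = ρ₂}) :
    ({p : EuclideanSpace ℝ (Fin 2) | dist p m₁ = ρ₁} ∩ {p | dist p m₂ = ρ₂} ∩
      {p | ‖p‖ < 1}).Subsingleton :=
  orthogonal_circles_at_most_one_intersection_in_unit_disk_general m₁ m₂ ρ₁ ρ₂ ho₁ ho₂ hne
end
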